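/- arXiv:1904.02753 — 2 statements merged into one kernel-verified Lean document; each statement's English description precedes it below -/
import Mathlib

section
/- Let A(w) be an affine matrix of size (m+n)×(m+n) over an associative unital ℂ-algebra 𝒜, and fix r ∈ {1,…,m+n}. Write A(w) in block form [[W(w), X(w)],[Y(w), Z(w)]] with W(w) of size r×r. Then the principal quasi-minors of A(w) satisfy d_i(A(w)) = d_i(W(w)) for i = 1,…,r, and d_i(A(w)) = d_{i−r}(Z(w) − Y(w)W(w)^{−1}X(w)) for i = r+1,…,m+n. -/
noncomputable section
open scoped Classical

/-- A superalgebra structure on an associative unital `ℂ`-algebra `A`: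
a `ℤ/2`-grading `A = A₀ ⊕ A₁` compatible with the multiplication. -/
structure SuperAlg (A : Type*) [Ring A] [Algebra ℂ A] where
  /-- The homogeneous components. -/
  g : ZMod 2 → Submodule ℂ A
  one_mem : (1 : A) ∈ g 0
  mul_mem : ∀ {d e : ZMod 2} {a b : A}, a ∈ g d → b ∈ g e → a * b ∈ g (d + e)
  decomp : ∀ a : A, ∃ a0 ∈ g 0, ∃ a1 ∈ g 1, a = a0 + a1
  disjoint : ∀ a : A, a ∈ g 0 → a ∈ g 1 → a = 0

/-- `(−1)^d` for `d : ℤ/2`. -/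
def sgnZ (d : ZMod 2) : ℤ := if d = 0 then 1 else -1

/-- A parity sequence: each `s i ∈ {1,−1}`. -/
def IsParitySeq {N : ℕ} (s : Fin N → ℤ) : Prop := ∀ i, s i = 1 ∨ s i = -1

/-- The `ℤ/2`-degree `ī^s` attached to a parity sequence. -/
def pdeg {N : ℕ} (s : Fin N → ℤ) (i : Fin N) : ZMod 2 := if s i = 1 then 0 else 1

/-- The supercommutator `[x,y] = xy − (−1)^{x̄·ȳ} yx` of elements of (declared) degrees
`dx`, `dy`. -/
def scomm {B : Type*} [Ring B] (dx dy : ZMod 2) (x y : B) : B :=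
  x * y - sgnZ (dx * dy) • (y * x)

/-- A matrix is of parity `s` if its `(i,j)` entry is homogeneous of degree `ī^s + j̄^s`
(with respect to the grading `g`). -/
def IsMatParity {B : Type*} [Ring B] [Algebra ℂ B] (g : ZMod 2 → Submodule ℂ B) {N : ℕ}
    (s : Fin N → ℤ) (M : Matrix (Fin N) (Fin N) B) : Prop :=
  ∀ i j, M i j ∈ g (pdeg s i + pdeg s j)

/-- A Manin matrix of parity `s`: a matrix of parity `s` whose entries satisfy
`[a_{i,j},a_{p,q}] = (−1)^{ī^s j̄^s + ī^s p̄^s + j̄^s p̄^s} [a_{p,j},a_{i,q}]`. -/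
def IsManin {B : Type*} [Ring B] [Algebra ℂ B] (g : ZMod 2 → Submodule ℂ B) {N : ℕ}
    (s : Fin N → ℤ) (M : Matrix (Fin N) (Fin N) B) : Prop :=
  IsMatParity g s M ∧
    ∀ i j p q, scomm (pdeg s i + pdeg s j) (pdeg s p + pdeg s q) (M i j) (M p q) =
      sgnZ (pdeg s i * pdeg s j + pdeg s i * pdeg s p + pdeg s j * pdeg s p) •
        scomm (pdeg s p + pdeg s j) (pdeg s i + pdeg s q) (M p j) (M i q)

/-- The grading on `𝒜[[w]]` induced by a grading on `𝒜` (the variable `w` is even):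
a power series is homogeneous of degree `d` iff all its coefficients are. -/
def gPS {A : Type*} [Ring A] [Algebra ℂ A] (g : ZMod 2 → Submodule ℂ A) (d : ZMod 2) :
    Submodule ℂ (PowerSeries A) where
  carrier := {f | ∀ t : ℕ, PowerSeries.coeff (R := A) t f ∈ g d}
  add_mem' := by
    intro f h hf hh t
    rw [map_add]
    exact (g d).add_mem (hf t) (hh t)
  zero_mem' := by
    intro t
    rw [map_zero]
    exact (g d).zero_mem
  smul_mem' := by
    intro c f hf t
    have : PowerSeries.coeff (R := A) t (c • f) = c • PowerSeries.coeff (R := A) t f := rfl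
    rw [this]
    exact (g d).smul_mem c (hf t)

/-- An affine matrix over `𝒜`: a matrix with entries in `𝒜[[w]]` whose constant term is the
identity matrix. -/
def IsAffine {A : Type*} [Ring A] {N : ℕ} (M : Matrix (Fin N) (Fin N) (PowerSeries A)) :
    Prop :=
  ∀ i j, PowerSeries.coeff (R := A) 0 (M i j) = if i = j then 1 else 0

/-- The leading principal `(i+1) × (i+1)` submatrix. -/
def leadSub {R : Type*} [Ring R] {N : ℕ} (M : Matrix (Fin N) (Fin N) R) (i : Fin N) :
    Matrix (Fin ((i : ℕ) + 1)) (Fin ((i : ℕ) + 1)) R :=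
  M.submatrix (Fin.castLE i.isLt) (Fin.castLE i.isLt)

/-- The `(i+1)`-st principal quasi-minor `d_{i+1}(M)`: the two-sided inverse of the last
diagonal entry of the two-sided inverse of the leading principal `(i+1) × (i+1)` submatrix
(`Ring.inverse` is the genuine two-sided inverse whenever one exists, and junk `0` otherwise). -/
def dQM {R : Type*} [Ring R] {N : ℕ} (M : Matrix (Fin N) (Fin N) R) (i : Fin N) : R :=
  Ring.inverse ((Ring.inverse (leadSub M i)) (Fin.last (i : ℕ)) (Fin.last (i : ℕ)))

/-- `x^e` for `e ∈ {1,−1}`: `x` itself for `e = 1` and the two-sided inverse for `e = −1`. -/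
def pexp {R : Type*} [Ring R] (x : R) (e : ℤ) : R := if e = 1 then x else Ring.inverse x

/-- Ordered product `f 0 * f 1 * ⋯ * f (N-1)` in a possibly noncommutative ring. -/
def listProd {R : Type*} [Ring R] {N : ℕ} (f : Fin N → R) : R :=
  ((List.finRange N).map f).prod

/-- The Berezinian of parity `s`: `Ber^s M = d_1(M)^{s_1} ⋯ d_N(M)^{s_N}`. -/
def berPar {R : Type*} [Ring R] {N : ℕ} (s : Fin N → ℤ) (M : Matrix (Fin N) (Fin N) R) : R :=
  listProd fun i => pexp (dQM M i) (s i)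

/-! Affine matrices are units, being power series with matrix coefficients and invertible constant
term. The bottom-right block of the inverse of `[[W, X], [Y, Z]]` is the inverse of the Schur
complement `Z - Y W⁻¹ X`; for `i ≥ r` the leading submatrix of size `i + 1` has the same
top-left block `W`, and its Schur complement is the leading submatrix of size `i - r + 1` of
that of the whole matrix, so the two last diagonal entries of the inverses agree. -/

theorem MulEquiv.map_ringInverse {M₀ N₀ : Type*} [MonoidWithZero M₀] [MonoidWithZero N₀]
    (φ : M₀ ≃* N₀) (a : M₀) : φ (Ring.inverse a) = Ring.inverse (φ a) := by
  by_cases ha : IsUnit a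
  · obtain ⟨u, rfl⟩ := ha
    have hφu : φ u = (Units.map (φ : M₀ →* N₀) u : N₀) := rfl
    rw [Ring.inverse_unit, hφu, Ring.inverse_unit, Units.coe_map_inv]
    rfl
  · rw [Ring.inverse_non_unit _ ha, Ring.inverse_non_unit _ (by simpa using ha), map_zero]

namespace Matrix

variable {R : Type*} [Ring R] {m n : Type*} [Fintype m] [Fintype n] [DecidableEq m]
  [DecidableEq n]

theorem ringInverse_submatrix_equiv (A : Matrix m m R) (e : n ≃ m) :
    Ring.inverse (A.submatrix e e) = (Ring.inverse A).submatrix e e :=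
  ((reindexRingEquiv R e.symm : Matrix m m R ≃* Matrix n n R).map_ringInverse A).symm

theorem ringInverse_fromBlocks_toBlocks₂₂ {W : Matrix m m R} {X : Matrix m n R}
    {Y : Matrix n m R} {Z : Matrix n n R} (hB : IsUnit (fromBlocks W X Y Z)) (hW : IsUnit W) :
    (Ring.inverse (fromBlocks W X Y Z)).toBlocks₂₂ = Ring.inverse (Z - Y * Ring.inverse W * X) := by
  set K := Ring.inverse (fromBlocks W X Y Z)
  have hBK : fromBlocks W X Y Z * K = 1 := Ring.mul_inverse_cancel _ hB
  have hKB : K * fromBlocks W X Y Z = 1 := Ring.inverse_mul_cancel _ hB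
  rw [← K.fromBlocks_toBlocks, fromBlocks_multiply, ← fromBlocks_one, fromBlocks_inj] at hBK hKB
  obtain ⟨-, hXT, -, hZT⟩ := hBK
  obtain ⟨-, -, hTY, hTZ⟩ := hKB
  have hXT' : X * K.toBlocks₂₂ = -(W * K.toBlocks₁₂) := eq_neg_of_add_eq_zero_right hXT
  have hTY' : K.toBlocks₂₂ * Y = -(K.toBlocks₂₁ * W) := eq_neg_of_add_eq_zero_right hTY
  refine (Ring.inverse_unit ⟨_, K.toBlocks₂₂, ?_, ?_⟩).symm
  · calc (Z - Y * Ring.inverse W * X) * K.toBlocks₂₂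
        = Y * (Ring.inverse W * W) * K.toBlocks₁₂ + Z * K.toBlocks₂₂ := by
          simp only [Matrix.sub_mul, Matrix.mul_assoc, hXT', Matrix.mul_neg, sub_neg_eq_add]
          abel
      _ = 1 := by rw [Ring.inverse_mul_cancel _ hW, Matrix.mul_one, hZT]
  · calc K.toBlocks₂₂ * (Z - Y * Ring.inverse W * X)
        = K.toBlocks₂₁ * (W * Ring.inverse W) * X + K.toBlocks₂₂ * Z := by
          simp only [Matrix.mul_sub, ← Matrix.mul_assoc, hTY', Matrix.neg_mul, sub_neg_eq_add]
          abel
      _ = 1 := by rw [Ring.mul_inverse_cancel _ hW, Matrix.mul_one, hTZ]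

end Matrix

namespace PowerSeries

variable {R : Type*} [Ring R] {n : Type*} [Fintype n] [DecidableEq n]

def toMatrix : PowerSeries (Matrix n n R) →+* Matrix n n (PowerSeries R) where
  toFun f := Matrix.of fun i j => mk fun k => coeff k f i j
  map_zero' := by ext; simp
  map_one' := by
    ext i j k
    by_cases hk : k = 0 <;> by_cases hij : i = j <;> simp [coeff_one, Matrix.one_apply, hk, hij]
  map_add' f g := by ext; simp
  map_mul' f g := by
    ext i j k
    simp only [Matrix.of_apply, coeff_mk, coeff_mul, Matrix.mul_apply, map_sum, Matrix.sum_apply]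
    exact Finset.sum_comm

theorem coeff_toMatrix_apply (f : PowerSeries (Matrix n n R)) (i j : n) (k : ℕ) :
    coeff k (toMatrix f i j) = coeff k f i j := by
  simp [toMatrix]

end PowerSeries

theorem IsAffine.isUnit {R : Type*} [Ring R] {N : ℕ} {M : Matrix (Fin N) (Fin N) (PowerSeries R)}
    (hM : IsAffine M) : IsUnit M := by
  set f : PowerSeries (Matrix (Fin N) (Fin N) R) :=
    PowerSeries.mk fun k => Matrix.of fun i j => PowerSeries.coeff k (M i j)
  have hf : PowerSeries.toMatrix f = M := by
    ext i j k
    simp [f, PowerSeries.coeff_toMatrix_apply]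
  have hf₀ : PowerSeries.constantCoeff f = 1 := by
    rw [← PowerSeries.coeff_zero_eq_constantCoeff_apply]
    ext i j
    simpa [f, Matrix.one_apply] using hM i j
  rw [← hf]
  exact (PowerSeries.isUnit_iff_constantCoeff.mpr (hf₀ ▸ isUnit_one)).map _

theorem IsAffine.submatrix {R : Type*} [Ring R] {N n : ℕ}
    {M : Matrix (Fin N) (Fin N) (PowerSeries R)} (hM : IsAffine M) {f : Fin n → Fin N}
    (hf : Function.Injective f) : IsAffine (M.submatrix f f) := fun i j => by
  simp [hM (f i) (f j), hf.eq_iff]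

theorem ringInverse_leadSub_natAdd_last {R : Type*} [Ring R] {r t : ℕ}
    (M : Matrix (Fin (r + t)) (Fin (r + t)) R) (k : Fin t)
    (hW : IsUnit (M.submatrix (Fin.castAdd t) (Fin.castAdd t)))
    (hM : IsUnit (leadSub M (Fin.natAdd r k))) :
    Ring.inverse (leadSub M (Fin.natAdd r k)) (Fin.last _) (Fin.last _) =
      Ring.inverse (leadSub (M.submatrix (Fin.natAdd r) (Fin.natAdd r) -
          M.submatrix (Fin.natAdd r) (Fin.castAdd t) *
            Ring.inverse (M.submatrix (Fin.castAdd t) (Fin.castAdd t)) *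
            M.submatrix (Fin.castAdd t) (Fin.natAdd r)) k) (Fin.last k) (Fin.last k) := by
  set f : Fin r → Fin (r + t) := Fin.castAdd t
  set g : Fin ((k : ℕ) + 1) → Fin (r + t) := Fin.natAdd r ∘ Fin.castLE k.isLt
  let e : Fin r ⊕ Fin ((k : ℕ) + 1) ≃ Fin ((Fin.natAdd r k : ℕ) + 1) :=
    finSumFinEquiv.trans (finCongr (by simp [Nat.add_assoc]))
  have hsplit : (leadSub M (Fin.natAdd r k)).submatrix e e =
      Matrix.fromBlocks (M.submatrix f f) (M.submatrix f g) (M.submatrix g f) (M.submatrix g g) := by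
    ext (a | a) (b | b) <;> rfl
  have hlast : e.symm (Fin.last _) = Sum.inr (Fin.last k) := by
    rw [Equiv.symm_apply_eq]
    ext
    simp [e]
  have hunit : IsUnit ((leadSub M (Fin.natAdd r k)).submatrix e e) :=
    hM.map (Matrix.reindexRingEquiv R e.symm)
  rw [hsplit] at hunit
  calc Ring.inverse (leadSub M (Fin.natAdd r k)) (Fin.last _) (Fin.last _)
      = Ring.inverse ((leadSub M (Fin.natAdd r k)).submatrix e e) (Sum.inr (Fin.last k))
          (Sum.inr (Fin.last k)) := by
        rw [Matrix.ringInverse_submatrix_equiv, Matrix.submatrix_apply, ← hlast,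
          Equiv.apply_symm_apply]
    _ = (Ring.inverse (Matrix.fromBlocks (M.submatrix f f) (M.submatrix f g) (M.submatrix g f)
          (M.submatrix g g))).toBlocks₂₂ (Fin.last k) (Fin.last k) := by
        rw [hsplit]
        rfl
    _ = _ := by
        rw [Matrix.ringInverse_fromBlocks_toBlocks₂₂ hunit hW]
        -- the Schur complement of the truncated blocks is the truncated Schur complement
        rfl

/-- **Statement 12.**  For an affine matrix `A(w) = [[W,X],[Y,Z]]` (block form, `W` of size
`r × r`) over an associative unital `ℂ`-algebra, the principal quasi-minors satisfy
`d_i(A(w)) = d_i(W(w))` for `i = 1,…,r` and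
`d_i(A(w)) = d_{i−r}(Z(w) − Y(w)W(w)⁻¹X(w))` for `i = r+1,…,m+n`. -/
theorem statement12 (A : Type*) [Ring A] (r t : ℕ)
    (M : Matrix (Fin (r + t)) (Fin (r + t)) (PowerSeries A))
    (haff : IsAffine M) :
    (∀ i : Fin (r + t), ∀ h : (i : ℕ) < r,
      dQM M i = dQM (M.submatrix (Fin.castAdd t) (Fin.castAdd t)) ⟨(i : ℕ), h⟩) ∧
    (∀ i : Fin (r + t), ∀ h : r ≤ (i : ℕ),
      dQM M i =
        dQM (M.submatrix (Fin.natAdd r) (Fin.natAdd r) -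
            M.submatrix (Fin.natAdd r) (Fin.castAdd t) *
              Ring.inverse (M.submatrix (Fin.castAdd t) (Fin.castAdd t)) *
              M.submatrix (Fin.castAdd t) (Fin.natAdd r))
          ⟨(i : ℕ) - r, by have := i.isLt; omega⟩) := by
  refine ⟨fun i h => rfl, fun i h => ?_⟩
  obtain ⟨k, rfl⟩ : ∃ k : Fin t, i = Fin.natAdd r k :=
    ⟨⟨i - r, by omega⟩, by ext; simp only [Fin.val_natAdd]; omega⟩
  simp only [Fin.val_natAdd, Nat.add_sub_cancel_left, Fin.eta]
  have hW := (haff.submatrix (Fin.castAdd_injective r t)).isUnit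
  have hM := (haff.submatrix (Fin.castLE_injective (Fin.natAdd r k).isLt)).isUnit
  rw [dQM, dQM, ringInverse_leadSub_natAdd_last M k hW hM]
end
end

section
/- Let A(w) be a 2×2 affine Manin matrix of parity (s_1,s_2) over a superalgebra 𝒜, and let σ be the transposition interchanging the two indices, so σ(A(w)) = (a_{σ(i),σ(j)}(w))_{i,j}. Then d_1(A(w))^{s_1} · d_2(A(w))^{s_2} = d_1(σ(A(w)))^{s_2} · d_2(σ(A(w)))^{s_1}. -/
/-! For an affine matrix the entries `a = M 0 0`, `d = M 1 1` and the quasideterminants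
`z = d - c a⁻¹ b`, `w = a - b d⁻¹ c` have constant term `1`, so they are invertible, and the
principal quasi-minors of `M` and of its conjugate by the swap are `a, z` and `d, w`. After
clearing inverses, the parities `(1,1)`, `(1,-1)`, `(-1,1)`, `(-1,-1)` turn the claim into
`a z = d w`, `w z = d a`, `z w = a d` and `z a = w d` respectively. Each follows by expanding the
products with three kinds of Manin relations: in an even column, an entry of an even row commutes
with the whole column and an entry of an odd row squares to zero; in an odd row, an odd entry
commutes with the whole row; and `a d - d a` is a signed combination of `c b` and `b c`. -/

noncomputable section
open scoped Classical

open scoped Ring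

theorem Ring.inverse_eq_of_mul_eq_one {R : Type*} [MonoidWithZero R] {x y : R}
    (h₁ : x * y = 1) (h₂ : y * x = 1) : x⁻¹ʳ = y :=
  Ring.inverse_unit ⟨x, y, h₁, h₂⟩

section QuasideterminantIdentities

variable {R : Type*} [Ring R] {a b c d : R}

theorem mul_quasidet_eq_of_commute_columns (ha : IsUnit a) (hd : IsUnit d)
    (hac : Commute a c) (hbd : Commute b d) (h : a * d - d * a = c * b - b * c) :
    a * (d - c * a⁻¹ʳ * b) = d * (a - b * d⁻¹ʳ * c) := by
  have hcb : a * (c * a⁻¹ʳ * b) = c * b := by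
    rw [← mul_assoc, ← mul_assoc, hac.eq, Ring.mul_inverse_cancel_right _ _ ha]
  have hbc : d * (b * d⁻¹ʳ * c) = b * c := by
    rw [← mul_assoc, ← mul_assoc, hbd.symm.eq, Ring.mul_inverse_cancel_right _ _ hd]
  rw [mul_sub, mul_sub, hcb, hbc, sub_eq_sub_iff_sub_eq_sub, h]

theorem inverse_mul_inverse_quasidet_eq_of_commute_rows (ha : IsUnit a) (hd : IsUnit d)
    (hab : Commute a b) (hcd : Commute c d) (h : a * d - d * a = -(c * b - b * c)) :
    a⁻¹ʳ * (d - c * a⁻¹ʳ * b)⁻¹ʳ = d⁻¹ʳ * (a - b * d⁻¹ʳ * c)⁻¹ʳ := by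
  have hcb : c * a⁻¹ʳ * b * a = c * b := by
    rw [mul_assoc _ b, ← hab.eq, ← mul_assoc, Ring.inverse_mul_cancel_right _ _ ha]
  have hbc : b * d⁻¹ʳ * c * d = b * c := by
    rw [mul_assoc _ c, hcd.eq, ← mul_assoc, Ring.inverse_mul_cancel_right _ _ hd]
  have key : (d - c * a⁻¹ʳ * b) * a = (a - b * d⁻¹ʳ * c) * d := by
    rw [sub_mul, sub_mul, hcb, hbc]
    linear_combination (norm := abel) -h
  rw [← Ring.inverse_mul (Or.inr ha), key, Ring.inverse_mul (Or.inr hd)]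

theorem mul_inverse_quasidet_eq_of_lower_sq_eq_zero (ha : IsUnit a) (hd : IsUnit d)
    (hz : IsUnit (d - c * a⁻¹ʳ * b))
    (hac : Commute a c) (hcd : Commute c d) (hcc : c * c = 0)
    (h : a * d - d * a = c * b + b * c) :
    a * (d - c * a⁻¹ʳ * b)⁻¹ʳ = d⁻¹ʳ * (a - b * d⁻¹ʳ * c) := by
  have hcb : a * (c * a⁻¹ʳ * b) = c * b := by
    rw [← mul_assoc, ← mul_assoc, hac.eq, Ring.mul_inverse_cancel_right _ _ ha]
  have hbc : b * d⁻¹ʳ * c * d = b * c := by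
    rw [mul_assoc _ c, hcd.eq, ← mul_assoc, Ring.inverse_mul_cancel_right _ _ hd]
  have hbccb : b * d⁻¹ʳ * c * (c * a⁻¹ʳ * b) = 0 := by
    simp only [mul_assoc, ← mul_assoc c c, hcc, zero_mul, mul_zero]
  have key : (a - b * d⁻¹ʳ * c) * (d - c * a⁻¹ʳ * b) = d * a := by
    rw [sub_mul, mul_sub, mul_sub, hcb, hbc, hbccb]
    linear_combination (norm := abel) h
  rw [eq_comm, Ring.inverse_mul_eq_iff_eq_mul _ _ _ hd, ← mul_assoc,
    Ring.eq_mul_inverse_iff_mul_eq _ _ _ hz, key]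

theorem inverse_mul_quasidet_eq_of_upper_sq_eq_zero (ha : IsUnit a) (hd : IsUnit d)
    (hw : IsUnit (a - b * d⁻¹ʳ * c))
    (hab : Commute a b) (hbd : Commute b d) (hbb : b * b = 0)
    (h : a * d - d * a = -(b * c + c * b)) :
    a⁻¹ʳ * (d - c * a⁻¹ʳ * b) = d * (a - b * d⁻¹ʳ * c)⁻¹ʳ := by
  have hcb : c * a⁻¹ʳ * b * a = c * b := by
    rw [mul_assoc _ b, ← hab.eq, ← mul_assoc, Ring.inverse_mul_cancel_right _ _ ha]
  have hbc : d * (b * d⁻¹ʳ * c) = b * c := by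
    rw [← mul_assoc, ← mul_assoc, hbd.symm.eq, Ring.mul_inverse_cancel_right _ _ hd]
  have hcbbc : c * a⁻¹ʳ * b * (b * d⁻¹ʳ * c) = 0 := by
    simp only [mul_assoc, ← mul_assoc b b, hbb, zero_mul, mul_zero]
  have key : (d - c * a⁻¹ʳ * b) * (a - b * d⁻¹ʳ * c) = a * d := by
    rw [sub_mul, mul_sub, mul_sub, hcb, hbc, hcbbc]
    linear_combination (norm := abel) -h
  rw [Ring.inverse_mul_eq_iff_eq_mul _ _ _ ha, ← mul_assoc,
    Ring.eq_mul_inverse_iff_mul_eq _ _ _ hw, key]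

end QuasideterminantIdentities

theorem sgnZ_mul_self (e : ZMod 2) : sgnZ e * sgnZ e = 1 := by
  unfold sgnZ; split_ifs <;> norm_num

section Parity

variable {N : ℕ} {s : Fin N → ℤ} {i : Fin N}

theorem pdeg_of_eq_one (h : s i = 1) : pdeg s i = 0 := by simp [pdeg, h]

theorem pdeg_of_eq_neg_one (h : s i = -1) : pdeg s i = 1 := by simp [pdeg, h]

theorem pexp_one {R : Type*} [Ring R] (x : R) : pexp x 1 = x := if_pos rfl

theorem pexp_neg_one {R : Type*} [Ring R] (x : R) : pexp x (-1) = x⁻¹ʳ := if_neg (by decide)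

end Parity

namespace IsManin

variable {B : Type*} [Ring B] [Algebra ℂ B] {g : ZMod 2 → Submodule ℂ B}

section Relations

variable {N : ℕ} {s : Fin N → ℤ} {M : Matrix (Fin N) (Fin N) B}

theorem mul_eq_sgnZ_smul_of_even_col (hM : IsManin g s M) {j : Fin N} (hj : pdeg s j = 0)
    (i p : Fin N) : M i j * M p j = sgnZ (pdeg s i * pdeg s p) • (M p j * M i j) := by
  have : IsAddTorsionFree B := .of_isTorsionFree ℂ B
  have h := hM.2 i j p j
  simp only [scomm, hj, add_zero, zero_add, mul_zero, zero_mul, mul_comm (pdeg s p)] at h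
  rw [← sub_eq_zero, ← self_eq_neg]
  conv_lhs => rw [h]
  rw [smul_sub, smul_smul, sgnZ_mul_self, one_smul, neg_sub]

theorem mul_eq_sgnZ_smul_of_odd_row (hM : IsManin g s M) {i : Fin N} (hi : pdeg s i = 1)
    (j q : Fin N) :
    M i j * M i q = sgnZ ((1 + pdeg s j) * (1 + pdeg s q)) • (M i q * M i j) := by
  have : IsAddTorsionFree B := .of_isTorsionFree ℂ B
  have h := hM.2 i j i q
  have hsgn : ∀ e : ZMod 2, 1 * e + 1 * 1 + e * 1 = 1 := by decide
  rw [hi, hsgn, show sgnZ 1 = -1 from rfl, neg_one_zsmul, self_eq_neg, scomm, sub_eq_zero] at h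
  exact h

theorem commutator_diag_eq (hM : IsManin g s M) (i p : Fin N) :
    M i i * M p p - M p p * M i i =
      sgnZ (pdeg s i) • (M p i * M i p - sgnZ (pdeg s i + pdeg s p) • (M i p * M p i)) := by
  have h := hM.2 i i p p
  have add_self : ∀ e : ZMod 2, e + e = 0 := by decide
  have hsgn : ∀ e f : ZMod 2, e * e + e * f + e * f = e := by decide
  have hsym : ∀ e f : ZMod 2, (f + e) * (e + f) = e + f := by decide
  simp only [scomm, add_self, hsgn, hsym, mul_zero, show sgnZ 0 = 1 from rfl, one_smul] at h
  exact h

theorem commute_of_even_col (hM : IsManin g s M) {i j : Fin N} (hi : pdeg s i = 0)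
    (hj : pdeg s j = 0) (p : Fin N) : Commute (M i j) (M p j) := by
  show M i j * M p j = M p j * M i j
  simpa [hi, sgnZ] using hM.mul_eq_sgnZ_smul_of_even_col hj i p

theorem mul_self_eq_zero_of_odd_row_of_even_col (hM : IsManin g s M) {i j : Fin N}
    (hi : pdeg s i = 1) (hj : pdeg s j = 0) : M i j * M i j = 0 := by
  have : IsAddTorsionFree B := .of_isTorsionFree ℂ B
  exact self_eq_neg.mp (by simpa [hi, sgnZ] using hM.mul_eq_sgnZ_smul_of_even_col hj i i)

theorem commute_of_odd_row (hM : IsManin g s M) {i j : Fin N} (hi : pdeg s i = 1)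
    (hj : pdeg s j = 1) (q : Fin N) : Commute (M i j) (M i q) := by
  have h := hM.mul_eq_sgnZ_smul_of_odd_row hi j q
  rwa [hj, show (1 + 1 : ZMod 2) = 0 from rfl, zero_mul, show sgnZ 0 = 1 from rfl, one_smul] at h

end Relations

theorem pexp_quasiMinors_swap_fin_two {s : Fin 2 → ℤ} (hs : IsParitySeq s)
    {M : Matrix (Fin 2) (Fin 2) B} (hM : IsManin g s M) (ha : IsUnit (M 0 0))
    (hd : IsUnit (M 1 1)) (hz : IsUnit (M 1 1 - M 1 0 * (M 0 0)⁻¹ʳ * M 0 1))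
    (hw : IsUnit (M 0 0 - M 0 1 * (M 1 1)⁻¹ʳ * M 1 0)) :
    pexp (M 0 0) (s 0) * pexp (M 1 1 - M 1 0 * (M 0 0)⁻¹ʳ * M 0 1) (s 1) =
      pexp (M 1 1) (s 1) * pexp (M 0 0 - M 0 1 * (M 1 1)⁻¹ʳ * M 1 0) (s 0) := by
  rcases hs 0 with h0 | h0 <;> rcases hs 1 with h1 | h1 <;>
    simp only [h0, h1, pexp_one, pexp_neg_one]
  · have e0 := pdeg_of_eq_one h0
    have e1 := pdeg_of_eq_one h1
    exact mul_quasidet_eq_of_commute_columns ha hd (hM.commute_of_even_col e0 e0 1)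
      (hM.commute_of_even_col e0 e1 1) (by simpa [e0, e1, sgnZ] using hM.commutator_diag_eq 0 1)
  · have e0 := pdeg_of_eq_one h0
    have e1 := pdeg_of_eq_neg_one h1
    exact mul_inverse_quasidet_eq_of_lower_sq_eq_zero ha hd hz
      (hM.commute_of_even_col e0 e0 1) (hM.commute_of_odd_row e1 e1 0).symm
      (hM.mul_self_eq_zero_of_odd_row_of_even_col e1 e0)
      (by simpa [e0, e1, sgnZ] using hM.commutator_diag_eq 0 1)
  · have e0 := pdeg_of_eq_neg_one h0
    have e1 := pdeg_of_eq_one h1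
    exact inverse_mul_quasidet_eq_of_upper_sq_eq_zero ha hd hw
      (hM.commute_of_odd_row e0 e0 1) (hM.commute_of_even_col e1 e1 0).symm
      (hM.mul_self_eq_zero_of_odd_row_of_even_col e0 e1)
      (by simpa [e0, e1, sgnZ] using hM.commutator_diag_eq 0 1)
  · have e0 := pdeg_of_eq_neg_one h0
    have e1 := pdeg_of_eq_neg_one h1
    exact inverse_mul_inverse_quasidet_eq_of_commute_rows ha hd (hM.commute_of_odd_row e0 e0 1)
      (hM.commute_of_odd_row e1 e0 1)
      (by simpa [e0, e1, sgnZ, CharTwo.add_self_eq_zero] using hM.commutator_diag_eq 0 1)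

end IsManin

section QuasiMinors

variable {R : Type*} [Ring R]

theorem dQM_zero_eq {n : ℕ} (M : Matrix (Fin (n + 1)) (Fin (n + 1)) R) (ha : IsUnit (M 0 0)) :
    dQM M 0 = M 0 0 := by
  -- `leadSub M 0` is indexed by `Fin (↑0 + 1)`, which is `Fin 1` only up to unfolding
  let L : Matrix (Fin 1) (Fin 1) R := leadSub M 0
  have hL : L 0 0 = M 0 0 := rfl
  have hinv : L⁻¹ʳ = Matrix.of fun _ _ => (M 0 0)⁻¹ʳ := by
    apply Ring.inverse_eq_of_mul_eq_one <;> ext i j <;> fin_cases i <;> fin_cases j <;>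
      simp [hL, Matrix.mul_apply, Ring.mul_inverse_cancel _ ha,
        Ring.inverse_mul_cancel _ ha]
  show (L⁻¹ʳ 0 0)⁻¹ʳ = M 0 0
  rw [hinv, Matrix.of_apply, Ring.inverse_inverse ha]

theorem Matrix.ringInverse_fin_two_apply_one_one {a b c d : R} (ha : IsUnit a)
    (hz : IsUnit (d - c * a⁻¹ʳ * b)) : (!![a, b; c, d])⁻¹ʳ 1 1 = (d - c * a⁻¹ʳ * b)⁻¹ʳ := by
  set ai := a⁻¹ʳ
  set zi := (d - c * ai * b)⁻¹ʳ
  have ha₁ : a * ai = 1 := Ring.mul_inverse_cancel a ha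
  have ha₂ : ai * a = 1 := Ring.inverse_mul_cancel a ha
  have ha₁' : ∀ x, a * (ai * x) = x := (Ring.mul_inverse_cancel_left a · ha)
  have hz₁ : c * (ai * (b * zi)) = d * zi - 1 := by
    have h : (d - c * ai * b) * zi = 1 := Ring.mul_inverse_cancel _ hz
    rw [← h, sub_mul, sub_sub_cancel]; simp only [mul_assoc]
  have hz₂ : zi * (c * (ai * b)) = zi * d - 1 := by
    have h : zi * (d - c * ai * b) = 1 := Ring.inverse_mul_cancel _ hz
    rw [← h, mul_sub, sub_sub_cancel]; simp only [mul_assoc]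
  have hz₁' : ∀ x, c * (ai * (b * (zi * x))) = d * (zi * x) - x := fun x => by
    rw [← mul_assoc b, ← mul_assoc ai, ← mul_assoc c, hz₁, sub_mul, one_mul, mul_assoc]
  have hinv : (!![a, b; c, d])⁻¹ʳ =
      !![ai + ai * b * zi * c * ai, -(ai * b * zi); -(zi * c * ai), zi] := by
    apply Ring.inverse_eq_of_mul_eq_one <;> rw [Matrix.mul_fin_two, Matrix.one_fin_two] <;>
      simp only [mul_add, add_mul, mul_neg, neg_mul, mul_sub, mul_assoc, mul_one, ha₁, ha₂, ha₁',
        hz₁, hz₂, hz₁'] <;> abel_nf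
  rw [hinv]; rfl

theorem dQM_one_eq_quasidet (M : Matrix (Fin 2) (Fin 2) R) (ha : IsUnit (M 0 0))
    (hz : IsUnit (M 1 1 - M 1 0 * (M 0 0)⁻¹ʳ * M 0 1)) :
    dQM M 1 = M 1 1 - M 1 0 * (M 0 0)⁻¹ʳ * M 0 1 := by
  have hlead : (leadSub M 1 : Matrix (Fin 2) (Fin 2) R) = !![M 0 0, M 0 1; M 1 0, M 1 1] := by
    ext i j; fin_cases i <;> fin_cases j <;> rfl
  show (((leadSub M 1 : Matrix (Fin 2) (Fin 2) R))⁻¹ʳ 1 1)⁻¹ʳ = _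
  rw [hlead, Matrix.ringInverse_fin_two_apply_one_one ha hz, Ring.inverse_inverse hz]

end QuasiMinors

namespace IsAffine

variable {A : Type*} [Ring A] {N : ℕ} {M : Matrix (Fin N) (Fin N) (PowerSeries A)}

theorem constantCoeff_apply (h : IsAffine M) (i j : Fin N) :
    PowerSeries.constantCoeff (M i j) = if i = j then 1 else 0 := by
  rw [← PowerSeries.coeff_zero_eq_constantCoeff_apply]; exact h i j

theorem isUnit_apply_self (h : IsAffine M) (i : Fin N) : IsUnit (M i i) := by
  simp [PowerSeries.isUnit_iff_constantCoeff, h.constantCoeff_apply]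

theorem isUnit_quasidet (h : IsAffine M) {i j : Fin N} (hij : i ≠ j) :
    IsUnit (M j j - M j i * (M i i)⁻¹ʳ * M i j) := by
  simp [PowerSeries.isUnit_iff_constantCoeff, h.constantCoeff_apply, hij, hij.symm]

end IsAffine

/-- **Statement 14.**  For a `2×2` affine Manin matrix `A(w)` of parity `(s_1,s_2)` and the
transposition `σ` of the two indices,
`d_1(A)^{s_1} · d_2(A)^{s_2} = d_1(σ(A))^{s_2} · d_2(σ(A))^{s_1}`. -/
theorem statement14 (A : Type*) [Ring A] [Algebra ℂ A] (S : SuperAlg A)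
    (s : Fin 2 → ℤ) (hs : IsParitySeq s)
    (M : Matrix (Fin 2) (Fin 2) (PowerSeries A))
    (haff : IsAffine M) (hM : IsManin (gPS S.g) s M) :
    pexp (dQM M 0) (s 0) * pexp (dQM M 1) (s 1) =
      pexp (dQM (M.submatrix ⇑(Equiv.swap (0 : Fin 2) 1) ⇑(Equiv.swap (0 : Fin 2) 1)) 0)
          (s 1) *
        pexp (dQM (M.submatrix ⇑(Equiv.swap (0 : Fin 2) 1) ⇑(Equiv.swap (0 : Fin 2) 1)) 1)
          (s 0) := by
  have ha := haff.isUnit_apply_self 0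
  have hd := haff.isUnit_apply_self 1
  have hz := haff.isUnit_quasidet zero_ne_one
  have hw := haff.isUnit_quasidet one_ne_zero
  have hswap : M.submatrix ⇑(Equiv.swap (0 : Fin 2) 1) ⇑(Equiv.swap (0 : Fin 2) 1) =
      !![M 1 1, M 1 0; M 0 1, M 0 0] := by
    ext i j; fin_cases i <;> fin_cases j <;> rfl
  rw [hswap, dQM_zero_eq _ ha, dQM_one_eq_quasidet _ ha hz, dQM_zero_eq _ hd,
    dQM_one_eq_quasidet !![M 1 1, M 1 0; M 0 1, M 0 0] hd hw]
  exact hM.pexp_quasiMinors_swap_fin_two hs ha hd hz hw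
end
end
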